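/- General q-state correlation-connectivity identity: for the q-state Potts model with fields ĥ = (h_{i,p}) on a finite graph G, at inverse temperature qβ, and p_{ij}=1-exp(-qβJ_{ij}), one has τ_{qβ,ĥ,q,V}(x,y) = (1 - 1/q) φ_{p,ĥ,q,G}(x ↔ y) + φ_{p,ĥ,q,G}(1_{{x ↮ y}} · (H_ĥ(K_t,K_u) - 1/q)), where H_ĥ(K_t,K_u) = [Σ_{r=1}^q exp(β Σ_{i∈K_t}h_{i,r} + β Σ_{i∈K_u}h_{i,r})] / ([Σ_{r=1}^q exp(β Σ_{i∈K_t}h_{i,r})]·[Σ_{r=1}^q exp(β Σ_{i∈K_u}h_{i,r})]). -/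

import Mathlib

open Finset

noncomputable section

variable {V : Type}

/-- The spin value (±1) attached to a Boolean spin (`true ↔ +1`, `false ↔ -1`). -/
def spin (b : Bool) : ℝ := if b then 1 else -1

/-- The subgraph of `G` whose open edges are the edges in `F`. -/
def openSub (G : SimpleGraph V) (F : Finset (Sym2 V)) : SimpleGraph V where
  Adj i j := G.Adj i j ∧ s(i, j) ∈ F
  symm := by
    constructor
    intro i j h
    exact ⟨h.1.symm, by rw [Sym2.eq_swap]; exact h.2⟩
  loopless := ⟨fun i h => G.loopless.irrefl i h.1⟩

instance [Fintype V] (H : SimpleGraph V) : Fintype H.ConnectedComponent := by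
  classical exact Fintype.ofSurjective H.connectedComponentMk Quot.exists_rep

/-- The vertex set of a connected component, as a `Finset`. -/
def compSupp [Fintype V] (H : SimpleGraph V) (c : H.ConnectedComponent) : Finset V := by
  classical exact Finset.univ.filter fun v => H.connectedComponentMk v = c

/-- Kronecker delta `δ_{σ_i,σ_j}` of a configuration on an (unordered) edge. -/
def eDelta {S : Type} [DecidableEq S] (σ : V → S) : Sym2 V → ℝ :=
  Sym2.lift ⟨fun i j => if σ i = σ j then 1 else 0, fun _ _ => by simp [eq_comm]⟩

/-- Product of spins `σ_i σ_j` on an (unordered) edge. -/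
def eProd (σ : V → Bool) : Sym2 V → ℝ :=
  Sym2.lift ⟨fun i j => spin (σ i) * spin (σ j), fun _ _ => mul_comm _ _⟩

/-- The consistency indicator `Δ(σ,ω)`: equal to `1` iff `σ` is constant on
every open edge of the configuration `F`. -/
def Delta (G : SimpleGraph V) (F : Finset (Sym2 V)) (σ : V → Bool) : ℝ := by
  classical exact if ∀ i j, G.Adj i j → s(i, j) ∈ F → σ i = σ j then 1 else 0

/-- The Bernoulli factor `B_J(ω) = ∏_{e open} p_e ∏_{e closed} (1-p_e)`. -/
def bern [Fintype V] [DecidableEq V] (G : SimpleGraph V) [DecidableRel G.Adj]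
    (p : Sym2 V → ℝ) (F : Finset (Sym2 V)) : ℝ :=
  (∏ e ∈ F, p e) * ∏ e ∈ G.edgeFinset \ F, (1 - p e)

/-- The (unnormalized) `q`-state Potts Boltzmann weight at inverse temperature
`qβ`, with fields `ĥ = (h i r)`. -/
def pottsWq [Fintype V] [DecidableEq V] (G : SimpleGraph V) [DecidableRel G.Adj]
    (q : ℕ) (β : ℝ) (J : Sym2 V → ℝ) (hh : V → Fin q → ℝ) (τ : V → Fin q) : ℝ :=
  Real.exp (-(q * β) *
    (-(∑ e ∈ G.edgeFinset, J e * eDelta τ e)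
      - ∑ r : Fin q, ∑ i, hh i r / q * (if τ i = r then 1 else 0)))

/-- The general random-cluster weight
`B_{J,q}(ω) ∏_α Σ_{p=1}^q exp(β Σ_{i∈K_α} h_{i,p})`. -/
def grcW [Fintype V] [DecidableEq V] (G : SimpleGraph V) [DecidableRel G.Adj]
    (q : ℕ) (β : ℝ) (p : Sym2 V → ℝ) (hh : V → Fin q → ℝ) (F : Finset (Sym2 V)) : ℝ :=
  bern G p F * ∏ c : (openSub G F).ConnectedComponent,
    ∑ r : Fin q, Real.exp (β * ∑ i ∈ compSupp (openSub G F) c, hh i r)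

/-- Expectation of `f` under the general random-cluster measure. -/
def grcE [Fintype V] [DecidableEq V] (G : SimpleGraph V) [DecidableRel G.Adj]
    (q : ℕ) (β : ℝ) (p : Sym2 V → ℝ) (hh : V → Fin q → ℝ)
    (f : Finset (Sym2 V) → ℝ) : ℝ :=
  (∑ F ∈ G.edgeFinset.powerset, f F * grcW G q β p hh F) /
    ∑ F ∈ G.edgeFinset.powerset, grcW G q β p hh F

/-- The component of `z` in the configuration `F`, as a `Finset`. -/
def Kcomp [Fintype V] [DecidableEq V] (G : SimpleGraph V) (F : Finset (Sym2 V))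
    (z : V) : Finset V :=
  compSupp (openSub G F) ((openSub G F).connectedComponentMk z)

/-- The random variable `H_ĥ(K_t,K_u)` of the two components `K_t ∋ x`, `K_u ∋ y`. -/
def Hfun [Fintype V] [DecidableEq V] (G : SimpleGraph V) (q : ℕ) (β : ℝ)
    (hh : V → Fin q → ℝ) (F : Finset (Sym2 V)) (x y : V) : ℝ :=
  (∑ r : Fin q, Real.exp (β * ∑ i ∈ Kcomp G F x, hh i r
      + β * ∑ i ∈ Kcomp G F y, hh i r)) /
    ((∑ r : Fin q, Real.exp (β * ∑ i ∈ Kcomp G F x, hh i r)) *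
      ∑ r : Fin q, Real.exp (β * ∑ i ∈ Kcomp G F y, hh i r))

/-!
Expanding every edge factor as `exp (qβ J_e δ_e) = (1 - p_e)⁻¹ (p_e δ_e + 1 - p_e)`
(Fortuin–Kasteleyn) turns a Potts partition sum into a sum over edge sets `F` of `B_J(F)`
times a sum over colourings that are constant on the open clusters of `F`. Such colourings
are functions on the clusters, so their field weight factorises over clusters and the unconstrained
sum is the random-cluster weight of `F`. Under the constraint `σ_x = σ_y`, a configuration in
which `x ↔ y` keeps its full weight, while otherwise the clusters `K_t ∋ x` and `K_u ∋ y` are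
forced to share a colour, which multiplies the weight by `H_ĥ(K_t, K_u)`.
-/

theorem Fintype.sum_filter_apply_eq_prod {ι α R : Type} [Fintype ι] [DecidableEq ι]
    [Fintype α] [DecidableEq α] [CommSemiring R] (f : ι → α → R) {a b : ι} (hab : a ≠ b) :
    ∑ g ∈ univ.filter (fun g : ι → α => g a = g b), ∏ c, f c (g c)
      = (∑ r, f a r * f b r) * ∏ c ∈ ({a, b} : Finset ι)ᶜ, ∑ r, f c r := by
  rw [← Finset.sum_fiberwise _ (fun g => g a), Finset.sum_mul]
  refine Finset.sum_congr rfl fun r _ => ?_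
  have hfiber : ((univ.filter fun g : ι → α => g a = g b).filter fun g => g a = r)
      = Fintype.piFinset fun c => if c ∈ ({a, b} : Finset ι) then {r} else univ := by
    ext g
    simp only [Finset.mem_filter, Finset.mem_univ, true_and, Fintype.mem_piFinset]
    constructor
    · rintro ⟨hgab, rfl⟩ c
      split_ifs with hc
      · rcases Finset.mem_insert.1 hc with rfl | hc <;> simp_all
      · exact Finset.mem_univ _
    · intro hg
      have ha := hg a
      have hb := hg b
      simp_all
  have hsum : ∀ c, ∑ s ∈ (if c ∈ ({a, b} : Finset ι) then {r} else univ), f c s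
      = if c ∈ ({a, b} : Finset ι) then f c r else ∑ s, f c s := by
    intro c; split_ifs <;> simp
  rw [hfiber, ← Finset.prod_univ_sum, Finset.prod_congr rfl fun c _ => hsum c, Finset.prod_ite,
    Finset.filter_mem_eq_inter, Finset.univ_inter, Finset.prod_pair hab, Finset.filter_not,
    Finset.filter_mem_eq_inter, Finset.univ_inter, Finset.compl_eq_univ_sdiff]

section ComponentSums

open scoped Classical

theorem SimpleGraph.Reachable.eq_of_forall_adj {α : Type} {H : SimpleGraph V} {τ : V → α}
    (hτ : ∀ i j, H.Adj i j → τ i = τ j) {v w : V} (h : H.Reachable v w) : τ v = τ w := by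
  obtain ⟨walk⟩ := h
  induction walk with
  | nil => rfl
  | cons hadj _ ih => exact (hτ _ _ hadj).trans ih

theorem filter_forall_adj_eq_image [Fintype V] [DecidableEq V] {α : Type} [Fintype α]
    [DecidableEq α] (H : SimpleGraph V) (s : Finset (V → α)) :
    s.filter (fun τ => ∀ i j, H.Adj i j → τ i = τ j)
      = (univ.filter fun g => g ∘ H.connectedComponentMk ∈ s).image
          (· ∘ H.connectedComponentMk) := by
  ext τ
  simp only [Finset.mem_filter, Finset.mem_image, Finset.mem_univ, true_and]
  constructor
  · rintro ⟨hτs, hτ⟩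
    exact ⟨Quot.lift τ fun _ _ h => h.eq_of_forall_adj hτ, hτs, rfl⟩
  · rintro ⟨g, hgs, rfl⟩
    exact ⟨hgs, fun i j hij =>
      congrArg g (SimpleGraph.ConnectedComponent.connectedComponentMk_eq_of_adj hij)⟩

theorem sum_filter_forall_adj_eq [Fintype V] [DecidableEq V] {α R : Type} [Fintype α]
    [DecidableEq α] [AddCommMonoid R] (H : SimpleGraph V) (s : Finset (V → α))
    (φ : (V → α) → R) :
    ∑ τ ∈ s.filter (fun τ => ∀ i j, H.Adj i j → τ i = τ j), φ τ
      = ∑ g ∈ univ.filter (fun g => g ∘ H.connectedComponentMk ∈ s),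
          φ (g ∘ H.connectedComponentMk) := by
  rw [filter_forall_adj_eq_image, Finset.sum_image]
  exact Quot.mk_surjective.injective_comp_right.injOn

theorem sum_compSupp [Fintype V] {M : Type} [AddCommMonoid M] (H : SimpleGraph V)
    (f : V → H.ConnectedComponent → M) :
    ∑ c, ∑ i ∈ compSupp H c, f i c = ∑ i, f i (H.connectedComponentMk i) := by
  rw [← Finset.sum_fiberwise univ H.connectedComponentMk]
  refine Finset.sum_congr rfl fun c _ => Finset.sum_congr ?_ fun i hi => ?_
  · ext i
    simp [compSupp]
  · rw [(Finset.mem_filter.1 hi).2]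

end ComponentSums

section FieldWeights

open scoped Classical

variable {q : ℕ}

def fieldWeight [Fintype V] (β : ℝ) (hh : V → Fin q → ℝ) (τ : V → Fin q) : ℝ :=
  Real.exp (β * ∑ i, hh i (τ i))

theorem fieldWeight_comp_connectedComponentMk [Fintype V] (β : ℝ) (hh : V → Fin q → ℝ)
    (H : SimpleGraph V) (g : H.ConnectedComponent → Fin q) :
    fieldWeight β hh (g ∘ H.connectedComponentMk)
      = ∏ c, Real.exp (β * ∑ i ∈ compSupp H c, hh i (g c)) := by
  rw [fieldWeight, ← Real.exp_sum, ← Finset.mul_sum, sum_compSupp H fun i c => hh i (g c)]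
  rfl

theorem sum_fieldWeight_filter_forall_adj [Fintype V] [DecidableEq V] (β : ℝ)
    (hh : V → Fin q → ℝ) (H : SimpleGraph V) :
    ∑ τ ∈ univ.filter (fun τ : V → Fin q => ∀ i j, H.Adj i j → τ i = τ j), fieldWeight β hh τ
      = ∏ c, ∑ r, Real.exp (β * ∑ i ∈ compSupp H c, hh i r) := by
  rw [sum_filter_forall_adj_eq, Fintype.prod_sum]
  simp [fieldWeight_comp_connectedComponentMk]

theorem sum_fieldWeight_filter_forall_adj_of_reachable [Fintype V] [DecidableEq V] (β : ℝ)
    (hh : V → Fin q → ℝ) {H : SimpleGraph V} {x y : V} (hxy : H.Reachable x y) :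
    ∑ τ ∈ (univ.filter fun τ : V → Fin q => τ x = τ y).filter
        (fun τ => ∀ i j, H.Adj i j → τ i = τ j), fieldWeight β hh τ
      = ∏ c, ∑ r, Real.exp (β * ∑ i ∈ compSupp H c, hh i r) := by
  rw [← sum_fieldWeight_filter_forall_adj, Finset.filter_filter]
  exact Finset.sum_congr (Finset.filter_congr fun τ _ => and_iff_right_of_imp
    hxy.eq_of_forall_adj) fun _ _ => rfl

theorem sum_fieldWeight_filter_forall_adj_of_not_reachable [Fintype V] [DecidableEq V]
    (β : ℝ) (hh : V → Fin q → ℝ) {H : SimpleGraph V} {x y : V} (hxy : ¬H.Reachable x y) :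
    ∑ τ ∈ (univ.filter fun τ : V → Fin q => τ x = τ y).filter
        (fun τ => ∀ i j, H.Adj i j → τ i = τ j), fieldWeight β hh τ
      = (∑ r, Real.exp (β * ∑ i ∈ compSupp H (H.connectedComponentMk x), hh i r)
          * Real.exp (β * ∑ i ∈ compSupp H (H.connectedComponentMk y), hh i r))
        * ∏ c ∈ ({H.connectedComponentMk x, H.connectedComponentMk y} : Finset _)ᶜ,
            ∑ r, Real.exp (β * ∑ i ∈ compSupp H c, hh i r) := by
  rw [sum_filter_forall_adj_eq, ← Fintype.sum_filter_apply_eq_prod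
    (fun c r => Real.exp (β * ∑ i ∈ compSupp H c, hh i r))
    fun h => hxy (SimpleGraph.ConnectedComponent.exact h)]
  simp [fieldWeight_comp_connectedComponentMk]

end FieldWeights

section FortuinKasteleyn

open scoped Classical

variable {q : ℕ}

theorem eDelta_eq_zero_or_one {S : Type} [DecidableEq S] (τ : V → S) (e : Sym2 V) :
    eDelta τ e = 0 ∨ eDelta τ e = 1 := by
  induction e using Sym2.ind with
  | _ i j => by_cases h : τ i = τ j <;> simp [eDelta, h]

theorem prod_eDelta_eq_ite [Fintype V] {S : Type} [DecidableEq S] (G : SimpleGraph V)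
    [DecidableRel G.Adj] {F : Finset (Sym2 V)} (hF : F ⊆ G.edgeFinset) (τ : V → S) :
    ∏ e ∈ F, eDelta τ e = if ∀ i j, (openSub G F).Adj i j → τ i = τ j then 1 else 0 := by
  split_ifs with h
  · refine Finset.prod_eq_one fun e he => ?_
    induction e using Sym2.ind with
    | _ i j =>
      have hij : G.Adj i j := by simpa using hF he
      simp [eDelta, h i j ⟨hij, he⟩]
  · push Not at h
    obtain ⟨i, j, hij, hne⟩ := h
    exact Finset.prod_eq_zero hij.2 (by simp [eDelta, hne])

theorem exp_mul_eq_of_eq_zero_or_one {t δ p : ℝ} (hδ : δ = 0 ∨ δ = 1)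
    (hp : p = 1 - Real.exp (-t)) :
    Real.exp (t * δ) = (1 - p)⁻¹ * (p * δ + (1 - p)) := by
  have h1p : 1 - p = Real.exp (-t) := by rw [hp]; ring
  rcases hδ with rfl | rfl
  · simp [h1p, Real.exp_ne_zero]
  · rw [mul_one, mul_one, add_sub_cancel, mul_one, h1p, Real.exp_neg, inv_inv]

theorem exp_sum_eDelta_eq_sum_bern [Fintype V] [DecidableEq V] (G : SimpleGraph V)
    [DecidableRel G.Adj] (β : ℝ) (J p : Sym2 V → ℝ)
    (hp : ∀ e, p e = 1 - Real.exp (-(q * β) * J e)) (τ : V → Fin q) :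
    Real.exp (∑ e ∈ G.edgeFinset, q * β * J e * eDelta τ e)
      = (∏ e ∈ G.edgeFinset, (1 - p e)⁻¹) *
          ∑ F ∈ G.edgeFinset.powerset, bern G p F * ∏ e ∈ F, eDelta τ e := by
  have hedge : ∀ e ∈ G.edgeFinset, Real.exp (q * β * J e * eDelta τ e)
      = (1 - p e)⁻¹ * (p e * eDelta τ e + (1 - p e)) := fun e _ =>
    exp_mul_eq_of_eq_zero_or_one (eDelta_eq_zero_or_one τ e) (by rw [hp]; ring_nf)
  rw [Real.exp_sum, Finset.prod_congr rfl hedge, Finset.prod_mul_distrib, Finset.prod_add]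
  congr 1
  refine Finset.sum_congr rfl fun F _ => ?_
  rw [bern, Finset.prod_mul_distrib]
  ring

theorem pottsWq_eq [Fintype V] [DecidableEq V] (G : SimpleGraph V) [DecidableRel G.Adj]
    (hq : q ≠ 0) (β : ℝ) (J : Sym2 V → ℝ) (hh : V → Fin q → ℝ) (τ : V → Fin q) :
    pottsWq G q β J hh τ
      = Real.exp (∑ e ∈ G.edgeFinset, q * β * J e * eDelta τ e) * fieldWeight β hh τ := by
  have hfield : ∑ r : Fin q, ∑ i, hh i r / q * (if τ i = r then 1 else 0)
      = (∑ i, hh i (τ i)) / q := by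
    rw [Finset.sum_comm, Finset.sum_div]
    simp
  have hedge : ∑ e ∈ G.edgeFinset, q * β * J e * eDelta τ e
      = q * β * ∑ e ∈ G.edgeFinset, J e * eDelta τ e := by
    rw [Finset.mul_sum]
    simp only [mul_assoc]
  rw [pottsWq, fieldWeight, ← Real.exp_add, hfield, hedge]
  congr 1
  field_simp
  ring

theorem sum_pottsWq_eq [Fintype V] [DecidableEq V] (G : SimpleGraph V) [DecidableRel G.Adj]
    (hq : q ≠ 0) (β : ℝ) (J : Sym2 V → ℝ) (hh : V → Fin q → ℝ) (p : Sym2 V → ℝ)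
    (hp : ∀ e, p e = 1 - Real.exp (-(q * β) * J e)) (s : Finset (V → Fin q)) :
    ∑ τ ∈ s, pottsWq G q β J hh τ
      = (∏ e ∈ G.edgeFinset, (1 - p e)⁻¹) * ∑ F ∈ G.edgeFinset.powerset, bern G p F *
          ∑ τ ∈ s.filter (fun τ => ∀ i j, (openSub G F).Adj i j → τ i = τ j),
            fieldWeight β hh τ := by
  simp_rw [pottsWq_eq G hq, exp_sum_eDelta_eq_sum_bern G β J p hp, mul_assoc, ← Finset.mul_sum,
    Finset.sum_mul]
  rw [Finset.sum_comm]
  refine congrArg _ (Finset.sum_congr rfl fun F hF => ?_)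
  rw [Finset.sum_filter, Finset.mul_sum]
  refine Finset.sum_congr rfl fun τ _ => ?_
  rw [prod_eDelta_eq_ite G (Finset.mem_powerset.1 hF)]
  split_ifs <;> ring

end FortuinKasteleyn

section RandomCluster

open scoped Classical

variable {q : ℕ}

theorem bern_mul_sum_fieldWeight_filter_forall_adj [Fintype V] [DecidableEq V]
    (G : SimpleGraph V) [DecidableRel G.Adj] (β : ℝ) (p : Sym2 V → ℝ) (hh : V → Fin q → ℝ)
    (F : Finset (Sym2 V)) :
    bern G p F * ∑ τ ∈ univ.filter (fun τ : V → Fin q =>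
        ∀ i j, (openSub G F).Adj i j → τ i = τ j), fieldWeight β hh τ = grcW G q β p hh F := by
  rw [sum_fieldWeight_filter_forall_adj]
  rfl

theorem bern_mul_sum_fieldWeight_filter_apply_eq [Fintype V] [DecidableEq V] [NeZero q]
    (G : SimpleGraph V) [DecidableRel G.Adj] (β : ℝ) (p : Sym2 V → ℝ) (hh : V → Fin q → ℝ)
    (F : Finset (Sym2 V)) (x y : V) :
    bern G p F * ∑ τ ∈ (univ.filter fun τ : V → Fin q => τ x = τ y).filter
        (fun τ => ∀ i j, (openSub G F).Adj i j → τ i = τ j), fieldWeight β hh τ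
      = grcW G q β p hh F * if (openSub G F).Reachable x y then 1 else Hfun G q β hh F x y := by
  by_cases hxy : (openSub G F).Reachable x y
  · rw [if_pos hxy, mul_one, sum_fieldWeight_filter_forall_adj_of_reachable β hh hxy,
      ← sum_fieldWeight_filter_forall_adj, bern_mul_sum_fieldWeight_filter_forall_adj]
  · rw [if_neg hxy, sum_fieldWeight_filter_forall_adj_of_not_reachable β hh hxy]
    set H := openSub G F
    set cx := H.connectedComponentMk x
    set cy := H.connectedComponentMk y
    have hne : cx ≠ cy := fun h => hxy (SimpleGraph.ConnectedComponent.exact h)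
    set S : H.ConnectedComponent → ℝ :=
      fun c => ∑ r : Fin q, Real.exp (β * ∑ i ∈ compSupp H c, hh i r)
    have hS_pos : ∀ c, 0 < S c :=
      fun c => Finset.sum_pos (fun r _ => Real.exp_pos _) univ_nonempty
    have hsplit : ∏ c, S c = S cx * S cy * ∏ c ∈ {cx, cy}ᶜ, S c := by
      rw [← Finset.prod_mul_prod_compl {cx, cy}, Finset.prod_pair hne]
    have hgrcW : grcW G q β p hh F = bern G p F * ∏ c, S c := rfl
    have hHfun : Hfun G q β hh F x y = (∑ r, Real.exp (β * ∑ i ∈ compSupp H cx, hh i r)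
        * Real.exp (β * ∑ i ∈ compSupp H cy, hh i r)) / (S cx * S cy) := by
      simp only [Hfun, Kcomp, Real.exp_add]
      rfl
    rw [hgrcW, hHfun, hsplit]
    have hSx := (hS_pos cx).ne'
    have hSy := (hS_pos cy).ne'
    field_simp

end RandomCluster

open scoped Classical in
theorem statement12_general [Fintype V] [DecidableEq V]
    (G : SimpleGraph V) [DecidableRel G.Adj]
    (q : ℕ) (hq : 2 ≤ q) (β : ℝ)
    (J : Sym2 V → ℝ)
    (hh : V → Fin q → ℝ)
    (p : Sym2 V → ℝ) (hp : ∀ e, p e = 1 - Real.exp (-(q * β) * J e))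
    (x y : V) :
    (∑ τ ∈ Finset.univ.filter (fun τ : V → Fin q => τ x = τ y),
          pottsWq G q β J hh τ) / (∑ τ : V → Fin q, pottsWq G q β J hh τ) - 1 / q
      = (1 - 1 / q) * grcE G q β p hh
            (fun F => if (openSub G F).Reachable x y then 1 else 0)
        + grcE G q β p hh
            (fun F => (if ¬ (openSub G F).Reachable x y then 1 else 0) *
              (Hfun G q β hh F x y - 1 / q)) := by
  have hq0 : q ≠ 0 := by omega
  have : NeZero q := ⟨hq0⟩
  have hD : ∑ τ : V → Fin q, pottsWq G q β J hh τ = (∏ e ∈ G.edgeFinset, (1 - p e)⁻¹) *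
      ∑ F ∈ G.edgeFinset.powerset, grcW G q β p hh F := by
    simp_rw [sum_pottsWq_eq G hq0 β J hh p hp, bern_mul_sum_fieldWeight_filter_forall_adj]
  have hN : ∑ τ ∈ univ.filter (fun τ : V → Fin q => τ x = τ y), pottsWq G q β J hh τ
      = (∏ e ∈ G.edgeFinset, (1 - p e)⁻¹) * ∑ F ∈ G.edgeFinset.powerset, grcW G q β p hh F *
          if (openSub G F).Reachable x y then 1 else Hfun G q β hh F x y := by
    simp_rw [sum_pottsWq_eq G hq0 β J hh p hp, bern_mul_sum_fieldWeight_filter_apply_eq]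
  have hD_pos : 0 < ∑ τ : V → Fin q, pottsWq G q β J hh τ :=
    Finset.sum_pos (fun τ _ => Real.exp_pos _) univ_nonempty
  obtain ⟨hC, hZ⟩ := mul_ne_zero_iff.1 (hD ▸ hD_pos.ne')
  have hsummand : ∀ F, (grcW G q β p hh F *
      if (openSub G F).Reachable x y then 1 else Hfun G q β hh F x y)
      = (1 - 1 / q) * ((if (openSub G F).Reachable x y then 1 else 0) * grcW G q β p hh F)
        + (if ¬ (openSub G F).Reachable x y then 1 else 0) * (Hfun G q β hh F x y - 1 / q)
            * grcW G q β p hh F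
        + 1 / q * grcW G q β p hh F := by
    intro F
    split_ifs <;> ring
  rw [hN, hD, grcE, grcE, Finset.sum_congr rfl fun F _ => hsummand F, Finset.sum_add_distrib,
    Finset.sum_add_distrib, ← Finset.mul_sum, ← Finset.mul_sum, mul_div_mul_left _ _ hC,
    add_div, add_div, mul_div_assoc, mul_div_assoc, div_self hZ]
  ring

open scoped Classical in
/-- Proposition (general `q`-state correlation-connectivity identity). -/
theorem statement12 [Fintype V] [DecidableEq V]
    (G : SimpleGraph V) [DecidableRel G.Adj]
    (q : ℕ) (hq : 2 ≤ q) (β : ℝ) (hβ : 0 < β)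
    (J : Sym2 V → ℝ) (hJ : ∀ e ∈ G.edgeFinset, 0 ≤ J e)
    (hh : V → Fin q → ℝ)
    (p : Sym2 V → ℝ) (hp : ∀ e, p e = 1 - Real.exp (-(q * β) * J e))
    (x y : V) (hxy : x ≠ y) :
    (∑ τ ∈ Finset.univ.filter (fun τ : V → Fin q => τ x = τ y),
          pottsWq G q β J hh τ) / (∑ τ : V → Fin q, pottsWq G q β J hh τ) - 1 / q
      = (1 - 1 / q) * grcE G q β p hh
            (fun F => if (openSub G F).Reachable x y then 1 else 0)
        + grcE G q β p hh
            (fun F => (if ¬ (openSub G F).Reachable x y then 1 else 0) *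
              (Hfun G q β hh F x y - 1 / q)) :=
  statement12_general G q hq β J hh p hp x y

end
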